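/- arXiv:1005.4293 — 3 statements merged into one kernel-verified Lean document; each statement's English description precedes it below -/
import Mathlib

section
/- For integers 1 ≤ i ≤ n, x ∈ [0,1], and q ∈ (0,1), the degree evaluation formula Σ_{k=i}^n (C(k,i)/C(n,i)) · B_{k,n}(x,q) = [x]_q^i · ([x]_q + [1−x]_q)^{n−i} holds. -/
/-!
The identity is purely algebraic in `a = [x]_q`, `b = [1 - x]_q`: the subset-of-a-subset identity
`C(k, i) C(n, k) = C(n, i) C(n - i, k - i)` turns the sum into `C(n, i) a^i` times the binomial
expansion of `(a + b)^(n - i)`.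
-/

open Finset Real

noncomputable def qnum (q x : ℝ) : ℝ := (1 - q ^ x) / (1 - q)

noncomputable def qB (k n : ℕ) (x q : ℝ) : ℝ :=
  (n.choose k : ℝ) * qnum q x ^ k * qnum q (1 - x) ^ (n - k)

theorem sum_choose_mul_choose_mul_pow {R : Type*} [CommSemiring R] (a b : R) {i n : ℕ}
    (hin : i ≤ n) :
    ∑ k ∈ Icc i n, ((k.choose i * n.choose k : ℕ) : R) * a ^ k * b ^ (n - k) =
      n.choose i * a ^ i * (a + b) ^ (n - i) := by
  rw [← Ico_add_one_right_eq_Icc, sum_Ico_eq_sum_range, show n + 1 - i = n - i + 1 by omega,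
    add_pow, mul_assoc, mul_sum, mul_sum]
  refine sum_congr rfl fun j _ => ?_
  have hchoose : (i + j).choose i * n.choose (i + j) = n.choose i * (n - i).choose j := by
    simpa [mul_comm] using Nat.choose_mul (n := n) (Nat.le_add_right i j)
  rw [hchoose, Nat.sub_add_eq, pow_add]
  push_cast
  ring

theorem stmt7_general (i n : ℕ) (hin : i ≤ n) (x q : ℝ) :
    ∑ k ∈ Finset.Icc i n, ((k.choose i : ℝ) / (n.choose i : ℝ)) * qB k n x q =
      qnum q x ^ i * (qnum q x + qnum q (1 - x)) ^ (n - i) := by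
  have hC : (n.choose i : ℝ) ≠ 0 := Nat.cast_ne_zero.mpr (Nat.choose_pos hin).ne'
  have hterm : ∀ k ∈ Icc i n, ((k.choose i : ℝ) / n.choose i) * qB k n x q =
      ((k.choose i * n.choose k : ℕ) : ℝ) * qnum q x ^ k * qnum q (1 - x) ^ (n - k) /
        n.choose i := by
    intro k _
    rw [qB]
    push_cast
    ring
  rw [sum_congr rfl hterm, ← sum_div, sum_choose_mul_choose_mul_pow _ _ hin]
  field_simp

theorem stmt7 (i n : ℕ) (hi : 1 ≤ i) (hin : i ≤ n) (x q : ℝ)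
    (hx : x ∈ Set.Icc (0:ℝ) 1) (hq : q ∈ Set.Ioo (0:ℝ) 1) :
    ∑ k ∈ Finset.Icc i n, ((k.choose i : ℝ) / (n.choose i : ℝ)) * qB k n x q =
      qnum q x ^ i * (qnum q x + qnum q (1 - x)) ^ (n - i) :=
  stmt7_general i n hin x q
end

section
/- For the modified q-Bernstein operator applied to f(x) = x, one has B_{n,q}(f : x) = Σ_{k=0}^n (k/n) · C(n,k) · [x]_q^k · [1−x]_q^{n−k} = [x]_q · (1 − [1−x]_q · [x]_q · (q−1))^{n−1} for n ≥ 1, x ∈ [0,1], q ∈ (0,1). -/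
open Finset Real

/-! The mean of the binomial weights `C(n,k) a^k b^(n-k)` is `n a (a+b)^(n-1)` for any `a, b`
(absorb `k` into `C(n,k)` and apply the binomial theorem to the rest), and for q-numbers the
identity `[x]_q + [1-x]_q = 1 - (q-1)[x]_q[1-x]_q`, which is `q^x q^(1-x) = q`, turns
`a + b` into the base appearing on the right-hand side. -/

theorem sum_range_mul_choose_mul_pow_mul_pow {R : Type*} [CommSemiring R] (a b : R) (n : ℕ) :
    ∑ k ∈ range (n + 1), (k : R) * n.choose k * a ^ k * b ^ (n - k) =
      n * a * (a + b) ^ (n - 1) := by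
  cases n with
  | zero => simp
  | succ m =>
    have hterm : ∀ k ∈ range (m + 1),
        ((k + 1 : ℕ) : R) * (m + 1).choose (k + 1) * a ^ (k + 1) * b ^ (m + 1 - (k + 1)) =
          (m + 1 : ℕ) * a * (a ^ k * b ^ (m - k) * m.choose k) := by
      intro k _
      rw [Nat.add_sub_add_right, mul_comm ((k + 1 : ℕ) : R), ← Nat.cast_mul,
        ← Nat.add_one_mul_choose_eq]
      push_cast
      ring
    rw [sum_range_succ', sum_congr rfl hterm, ← mul_sum, ← add_pow]
    simp

theorem sum_range_div_mul_choose_mul_pow_mul_pow {K : Type*} [Field K] [CharZero K]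
    (a b : K) {n : ℕ} (hn : n ≠ 0) :
    ∑ k ∈ range (n + 1), ((k : K) / n) * n.choose k * a ^ k * b ^ (n - k) =
      a * (a + b) ^ (n - 1) := by
  have hn' : (n : K) ≠ 0 := Nat.cast_ne_zero.mpr hn
  simp_rw [div_eq_mul_inv, mul_right_comm _ (n : K)⁻¹, ← sum_mul,
    sum_range_mul_choose_mul_pow_mul_pow]
  field_simp

theorem one_sub_qnum_one_sub_mul_qnum_mul {q : ℝ} (hq0 : 0 < q) (hq1 : q ≠ 1) (x : ℝ) :
    1 - qnum q (1 - x) * qnum q x * (q - 1) = qnum q x + qnum q (1 - x) := by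
  have hpow : q ^ x * q ^ (1 - x) = q := by
    rw [← rpow_add hq0, add_sub_cancel, rpow_one]
  have hq1' : 1 - q ≠ 0 := sub_ne_zero.mpr hq1.symm
  unfold qnum
  field_simp
  linear_combination (1 - q) * hpow

theorem stmt14_general (n : ℕ) (hn : 1 ≤ n) (x q : ℝ)
    (hq : q ∈ Set.Ioo (0:ℝ) 1) :
    ∑ k ∈ Finset.range (n + 1),
        ((k : ℝ) / (n : ℝ)) * (n.choose k : ℝ) * qnum q x ^ k * qnum q (1 - x) ^ (n - k) =
      qnum q x * (1 - qnum q (1 - x) * qnum q x * (q - 1)) ^ (n - 1) := by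
  rw [one_sub_qnum_one_sub_mul_qnum_mul hq.1 hq.2.ne x,
    sum_range_div_mul_choose_mul_pow_mul_pow _ _ (Nat.one_le_iff_ne_zero.mp hn)]

theorem stmt14 (n : ℕ) (hn : 1 ≤ n) (x q : ℝ)
    (hx : x ∈ Set.Icc (0:ℝ) 1) (hq : q ∈ Set.Ioo (0:ℝ) 1) :
    ∑ k ∈ Finset.range (n + 1),
        ((k : ℝ) / (n : ℝ)) * (n.choose k : ℝ) * qnum q x ^ k * qnum q (1 - x) ^ (n - k) =
      qnum q x * (1 - qnum q (1 - x) * qnum q x * (q - 1)) ^ (n - 1) :=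
  stmt14_general n hn x q hq
end

section
/- For integers 1 ≤ i ≤ n, x ∈ [0,1], and q ∈ (0,1), Σ_{k=0}^i q^{C(k,2)} · qbinom(x,k) · [k]_q! · S(i,k:q) = (1/([1−x]_q + [x]_q)^{n−i}) · Σ_{k=i}^n (C(k,i)/C(n,i)) · B_{k,n}(x,q). -/
open Finset Real

noncomputable def qfact (q : ℝ) : ℕ → ℝ
  | 0 => 1
  | n + 1 => qnum q ((n : ℝ) + 1) * qfact q n

noncomputable def qbin (q : ℝ) (k j : ℕ) : ℝ := qfact q k / (qfact q j * qfact q (k - j))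

noncomputable def qStir (q : ℝ) (n k : ℕ) : ℝ :=
  (∑ j ∈ Finset.range (k + 1),
      (-1 : ℝ) ^ j * q ^ j.choose 2 * qbin q k j * qnum q ((k - j : ℕ) : ℝ) ^ n) /
    (q ^ k.choose 2 * qfact q k)

noncomputable def qbinX (q x : ℝ) (k : ℕ) : ℝ :=
  (∏ i ∈ Finset.range k, qnum q (x - (i : ℝ))) / qfact q k

/-!
Write `[y]` for `qnum q y`. The left side is the q-analogue of the expansion of `x ^ i` in
falling factorials. With `c k = q ^ C(k,2) [x][x-1]⋯[x-k+1]`, the splitting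
`[x] = [k] + q ^ k [x-k]` gives `[x] c k = [k] c k + c (k+1)`, while the q-Stirling numbers
satisfy `S(i+1,k+1) = S(i,k) + [k+1] S(i,k+1)` and vanish for `k > i`; induction on `i` then
yields `[x] ^ i`. The recurrence comes from `[k-j] = [k] - q ^ (k-j) [j]` and q-Pascal, the
vanishing from Gauss's q-binomial theorem at `z = -1`. The right side equals
`[x] ^ i ([1-x] + [x]) ^ (n-i)` by `C(n,k) C(k,i) = C(n,i) C(n-i,k-i)` and the binomial theorem,
and `[1-x] + [x] > 0` on `[0,1]`.
-/

section QNumbers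

variable {q : ℝ}

lemma qnum_zero (q : ℝ) : qnum q 0 = 0 := by
  simp [qnum]

lemma qnum_natCast (q : ℝ) (m : ℕ) : qnum q m = (1 - q ^ m) / (1 - q) := by
  rw [qnum, Real.rpow_natCast]

lemma qnum_add (hq : 0 < q) (a b : ℝ) : qnum q (a + b) = qnum q a + q ^ a * qnum q b := by
  simp only [qnum, Real.rpow_add hq]
  ring

lemma qnum_natCast_add (q : ℝ) (a b : ℕ) :
    qnum q ↑(a + b) = qnum q a + q ^ a * qnum q b := by
  simp only [qnum_natCast, pow_add]
  ring

lemma qnum_pos (hq0 : 0 < q) (hq1 : q ≠ 1) {y : ℝ} (hy : 0 < y) : 0 < qnum q y := by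
  rcases hq1.lt_or_gt with h | h
  · exact div_pos (by linarith [Real.rpow_lt_one hq0.le h hy]) (by linarith)
  · exact div_pos_of_neg_of_neg (by linarith [Real.one_lt_rpow h hy]) (by linarith)

lemma qnum_nonneg (hq0 : 0 < q) (hq1 : q ≠ 1) {y : ℝ} (hy : 0 ≤ y) : 0 ≤ qnum q y := by
  rcases hy.eq_or_lt with rfl | hy
  · rw [qnum_zero]
  · exact (qnum_pos hq0 hq1 hy).le

lemma qnum_natCast_succ_ne_zero (hq0 : 0 < q) (hq1 : q ≠ 1) (m : ℕ) : qnum q ↑(m + 1) ≠ 0 :=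
  (qnum_pos hq0 hq1 (by positivity)).ne'

lemma qfact_succ (q : ℝ) (n : ℕ) : qfact q (n + 1) = qnum q ↑(n + 1) * qfact q n := by
  rw [qfact, Nat.cast_succ]

lemma qfact_ne_zero (hq0 : 0 < q) (hq1 : q ≠ 1) (n : ℕ) : qfact q n ≠ 0 := by
  induction n with
  | zero => simp [qfact]
  | succ n ih => rw [qfact_succ]; exact mul_ne_zero (qnum_natCast_succ_ne_zero hq0 hq1 n) ih

lemma choose_two_succ (k : ℕ) : (k + 1).choose 2 = k.choose 2 + k := by
  rw [Nat.choose_succ_succ', Nat.choose_one_right, add_comm]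

end QNumbers

section QBinomial

variable {q : ℝ}

lemma qbin_zero_right (hq0 : 0 < q) (hq1 : q ≠ 1) (k : ℕ) : qbin q k 0 = 1 := by
  simp [qbin, qfact, qfact_ne_zero hq0 hq1]

lemma qbin_self (hq0 : 0 < q) (hq1 : q ≠ 1) (k : ℕ) : qbin q k k = 1 := by
  simp [qbin, qfact, qfact_ne_zero hq0 hq1]

lemma qbin_succ_mul_qnum (hq0 : 0 < q) (hq1 : q ≠ 1) (m j : ℕ) :
    qbin q (m + 1) (j + 1) * qnum q ↑(j + 1) = qnum q ↑(m + 1) * qbin q m j := by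
  have := qfact_ne_zero hq0 hq1
  have := qnum_natCast_succ_ne_zero hq0 hq1 j
  rw [qbin, qbin, qfact_succ q m, qfact_succ q j, Nat.succ_sub_succ]
  field_simp

lemma qbin_succ_succ (hq0 : 0 < q) (hq1 : q ≠ 1) {m j : ℕ} (h : j < m) :
    qbin q (m + 1) (j + 1) = qbin q m (j + 1) + q ^ (m - j) * qbin q m j := by
  obtain ⟨r, rfl⟩ := Nat.exists_eq_add_of_lt h
  have := qfact_ne_zero hq0 hq1
  have := qnum_natCast_succ_ne_zero hq0 hq1 j
  have := qnum_natCast_succ_ne_zero hq0 hq1 r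
  have hsplit :
      qnum q ↑(j + r + 1 + 1) = qnum q ↑(r + 1) + q ^ (r + 1) * qnum q ↑(j + 1) := by
    rw [← qnum_natCast_add]; ring_nf
  simp only [qbin, show j + r + 1 + 1 - (j + 1) = r + 1 by omega,
    show j + r + 1 - (j + 1) = r by omega, show j + r + 1 - j = r + 1 by omega]
  rw [qfact_succ q (j + r + 1), qfact_succ q j, qfact_succ q r, hsplit]
  field_simp

lemma sum_qbin_mul_pow (hq0 : 0 < q) (hq1 : q ≠ 1) (z : ℝ) (k : ℕ) :
    ∑ j ∈ range (k + 1), q ^ j.choose 2 * qbin q k j * z ^ j =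
      ∏ j ∈ range k, (1 + q ^ j * z) := by
  induction k with
  | zero => simp [qbin_self hq0 hq1]
  | succ k ih =>
    have hpascal : ∀ j ∈ range k, q ^ (j + 1).choose 2 * qbin q (k + 1) (j + 1) * z ^ (j + 1) =
        q ^ (j + 1).choose 2 * qbin q k (j + 1) * z ^ (j + 1) +
          q ^ k * z * (q ^ j.choose 2 * qbin q k j * z ^ j) := by
      intro j hj
      have hj := mem_range.mp hj
      rw [qbin_succ_succ hq0 hq1 hj, choose_two_succ, ← pow_mul_pow_sub q hj.le]
      ring_nf
    have hlow := sum_range_succ' (fun j => q ^ j.choose 2 * qbin q k j * z ^ j) k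
    have hhigh := sum_range_succ (fun j => q ^ j.choose 2 * qbin q k j * z ^ j) k
    rw [sum_range_succ', sum_range_succ, sum_congr rfl hpascal, sum_add_distrib, ← mul_sum,
      prod_range_succ, ← ih]
    simp only [qbin_zero_right hq0 hq1, qbin_self hq0 hq1, choose_two_succ] at hlow hhigh ⊢
    linear_combination -hlow - q ^ k * z * hhigh

end QBinomial

section QStirling

variable {q : ℝ}

noncomputable def qStirNumerator (q : ℝ) (n k : ℕ) : ℝ :=
  ∑ j ∈ range (k + 1),
    (-1 : ℝ) ^ j * q ^ j.choose 2 * qbin q k j * qnum q ((k - j : ℕ) : ℝ) ^ n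

lemma qStir_eq_div (q : ℝ) (n k : ℕ) :
    qStir q n k = qStirNumerator q n k / (q ^ k.choose 2 * qfact q k) := rfl

lemma qStirNumerator_zero_succ (hq0 : 0 < q) (hq1 : q ≠ 1) (k : ℕ) :
    qStirNumerator q 0 (k + 1) = 0 := by
  have h := sum_qbin_mul_pow hq0 hq1 (-1) (k + 1)
  rw [prod_range_succ', pow_zero, one_mul, add_neg_cancel, mul_zero] at h
  rw [qStirNumerator, ← h]
  exact sum_congr rfl fun j _ => by ring

lemma qStirNumerator_succ_succ (hq0 : 0 < q) (hq1 : q ≠ 1) (i m : ℕ) :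
    qStirNumerator q (i + 1) (m + 1) =
      qnum q ↑(m + 1) * (qStirNumerator q i (m + 1) + q ^ m * qStirNumerator q i m) := by
  have hsplit : ∀ j ∈ range (m + 2),
      (-1 : ℝ) ^ j * q ^ j.choose 2 * qbin q (m + 1) j * qnum q ↑(m + 1 - j) ^ (i + 1) =
        qnum q ↑(m + 1) *
            ((-1 : ℝ) ^ j * q ^ j.choose 2 * qbin q (m + 1) j * qnum q ↑(m + 1 - j) ^ i)
        - (-1 : ℝ) ^ j * q ^ j.choose 2 * qbin q (m + 1) j * q ^ (m + 1 - j) * qnum q j *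
          qnum q ↑(m + 1 - j) ^ i := by
    intro j hj
    have h := qnum_natCast_add q (m + 1 - j) j
    rw [Nat.sub_add_cancel (by simpa [Nat.lt_succ_iff] using hj)] at h
    rw [h, pow_succ]
    ring
  have hshift : ∀ j ∈ range (m + 1),
      (-1 : ℝ) ^ (j + 1) * q ^ (j + 1).choose 2 * qbin q (m + 1) (j + 1) * q ^ (m + 1 - (j + 1)) *
          qnum q ↑(j + 1) * qnum q ↑(m + 1 - (j + 1)) ^ i =
        -(q ^ m * qnum q ↑(m + 1)) *
          ((-1 : ℝ) ^ j * q ^ j.choose 2 * qbin q m j * qnum q ↑(m - j) ^ i) := by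
    intro j hj
    have hb := qbin_succ_mul_qnum hq0 hq1 m j
    rw [Nat.succ_sub_succ, choose_two_succ, pow_add, pow_succ,
      ← pow_mul_pow_sub q (Nat.lt_succ_iff.mp (mem_range.mp hj))]
    linear_combination
      -((-1 : ℝ) ^ j * q ^ j.choose 2 * q ^ j * q ^ (m - j) * qnum q ↑(m - j) ^ i) * hb
  have hshifted : ∑ j ∈ range (m + 2), (-1 : ℝ) ^ j * q ^ j.choose 2 * qbin q (m + 1) j *
      q ^ (m + 1 - j) * qnum q j * qnum q ↑(m + 1 - j) ^ i =
        -(q ^ m * qnum q ↑(m + 1)) * qStirNumerator q i m := by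
    rw [sum_range_succ', sum_congr rfl hshift, ← mul_sum, qStirNumerator]
    simp [qnum_zero]
  rw [qStirNumerator, sum_congr rfl hsplit, sum_sub_distrib, ← mul_sum, hshifted]
  simp only [qStirNumerator]
  ring

lemma qStirNumerator_eq_zero_of_lt (hq0 : 0 < q) (hq1 : q ≠ 1) {i k : ℕ} (h : i < k) :
    qStirNumerator q i k = 0 := by
  induction i generalizing k with
  | zero =>
    obtain ⟨k, rfl⟩ := Nat.exists_eq_add_one_of_ne_zero h.ne'
    exact qStirNumerator_zero_succ hq0 hq1 k
  | succ i ih =>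
    obtain ⟨m, rfl⟩ := Nat.exists_eq_add_one_of_ne_zero (by omega : k ≠ 0)
    rw [qStirNumerator_succ_succ hq0 hq1, ih (by omega), ih (by omega)]
    ring

lemma qStir_zero_zero (hq0 : 0 < q) (hq1 : q ≠ 1) : qStir q 0 0 = 1 := by
  simp [qStir, qfact, qbin_self hq0 hq1]

lemma qStir_succ_zero (q : ℝ) (i : ℕ) : qStir q (i + 1) 0 = 0 := by
  simp [qStir, qnum_zero]

lemma qStir_eq_zero_of_lt (hq0 : 0 < q) (hq1 : q ≠ 1) {i k : ℕ} (h : i < k) :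
    qStir q i k = 0 := by
  rw [qStir_eq_div, qStirNumerator_eq_zero_of_lt hq0 hq1 h, zero_div]

lemma qStir_succ_succ (hq0 : 0 < q) (hq1 : q ≠ 1) (i m : ℕ) :
    qStir q (i + 1) (m + 1) = qStir q i m + qnum q ↑(m + 1) * qStir q i (m + 1) := by
  have hfact := qfact_ne_zero hq0 hq1 m
  have hnum := qnum_natCast_succ_ne_zero hq0 hq1 m
  have hq := hq0.ne'
  simp only [qStir_eq_div, qStirNumerator_succ_succ hq0 hq1, qfact_succ q m, choose_two_succ,
    pow_add]
  field_simp
  ring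

end QStirling

section QFalling

variable {q : ℝ}

lemma qbinX_mul_qfact (hq0 : 0 < q) (hq1 : q ≠ 1) (x : ℝ) (k : ℕ) :
    qbinX q x k * qfact q k = ∏ j ∈ range k, qnum q (x - j) :=
  div_mul_cancel₀ _ (qfact_ne_zero hq0 hq1 k)

lemma qnum_mul_prod_qnum_sub (hq0 : 0 < q) (x : ℝ) (k : ℕ) :
    qnum q x * (q ^ k.choose 2 * ∏ j ∈ range k, qnum q (x - j)) =
      qnum q k * (q ^ k.choose 2 * ∏ j ∈ range k, qnum q (x - j)) +
        q ^ (k + 1).choose 2 * ∏ j ∈ range (k + 1), qnum q (x - j) := by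
  have h := qnum_add hq0 k (x - k)
  rw [add_sub_cancel, Real.rpow_natCast] at h
  rw [prod_range_succ, choose_two_succ, pow_add, h]
  ring

lemma sum_qbinX_mul_qStir (hq0 : 0 < q) (hq1 : q ≠ 1) (x : ℝ) (i : ℕ) :
    ∑ k ∈ range (i + 1), q ^ k.choose 2 * qbinX q x k * qfact q k * qStir q i k =
      qnum q x ^ i := by
  set c : ℕ → ℝ := fun k => q ^ k.choose 2 * ∏ j ∈ range k, qnum q (x - j) with hc
  have hterm : ∀ k, q ^ k.choose 2 * qbinX q x k * qfact q k = c k := fun k => by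
    rw [mul_assoc, qbinX_mul_qfact hq0 hq1]
  simp only [hterm]
  induction i with
  | zero => simp [hc, qStir_zero_zero hq0 hq1]
  | succ i ih =>
    set g : ℕ → ℝ := fun k => qnum q k * c k * qStir q i k with hg
    have hshift : ∑ k ∈ range (i + 1), g (k + 1) = ∑ k ∈ range (i + 1), g k := by
      have hlow := sum_range_succ' g (i + 1)
      have hhigh := sum_range_succ g (i + 1)
      have hg0 : g 0 = 0 := by simp [hg, qnum_zero]
      have hgi : g (i + 1) = 0 := by simp [hg, qStir_eq_zero_of_lt hq0 hq1 (Nat.lt_succ_self i)]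
      linear_combination hhigh - hlow + hgi - hg0
    calc ∑ k ∈ range (i + 2), c k * qStir q (i + 1) k
        = ∑ k ∈ range (i + 1), c (k + 1) * qStir q (i + 1) (k + 1) := by
          rw [sum_range_succ', qStir_succ_zero, mul_zero, add_zero]
      _ = ∑ k ∈ range (i + 1), c (k + 1) * qStir q i k +
            ∑ k ∈ range (i + 1), g (k + 1) := by
          rw [← sum_add_distrib]
          exact sum_congr rfl fun k _ => by rw [qStir_succ_succ hq0 hq1]; ring
      _ = ∑ k ∈ range (i + 1), qnum q x * (c k * qStir q i k) := by
          rw [hshift, ← sum_add_distrib]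
          exact sum_congr rfl fun k _ => by
            linear_combination -qStir q i k * qnum_mul_prod_qnum_sub hq0 x k
      _ = qnum q x ^ (i + 1) := by rw [← mul_sum, ih, pow_succ']

end QFalling

lemma sum_Icc_choose_mul_choose_mul_pow {R : Type*} [CommSemiring R] (a b : R) {i n : ℕ}
    (h : i ≤ n) :
    ∑ k ∈ Icc i n, (n.choose k : R) * k.choose i * a ^ k * b ^ (n - k) =
      n.choose i * a ^ i * (a + b) ^ (n - i) := by
  rw [← Ico_add_one_right_eq_Icc, sum_Ico_eq_sum_range, show n + 1 - i = n - i + 1 by omega,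
    add_pow, mul_sum]
  refine sum_congr rfl fun j hj => ?_
  have hj := mem_range.mp hj
  rw [← Nat.cast_mul, Nat.choose_mul (by omega : i ≤ i + j), Nat.add_sub_cancel_left,
    show n - (i + j) = n - i - j by omega, pow_add]
  push_cast
  ring

lemma sum_Icc_choose_div_mul_qB {i n : ℕ} (h : i ≤ n) (x q : ℝ) :
    ∑ k ∈ Icc i n, ((k.choose i : ℝ) / (n.choose i : ℝ)) * qB k n x q =
      qnum q x ^ i * (qnum q (1 - x) + qnum q x) ^ (n - i) := by
  have hC : (n.choose i : ℝ) ≠ 0 := by exact_mod_cast (Nat.choose_pos h).ne'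
  calc ∑ k ∈ Icc i n, ((k.choose i : ℝ) / (n.choose i : ℝ)) * qB k n x q
      = (∑ k ∈ Icc i n,
            (n.choose k : ℝ) * k.choose i * qnum q x ^ k * qnum q (1 - x) ^ (n - k)) /
          n.choose i := by
        rw [sum_div]
        exact sum_congr rfl fun k _ => by rw [qB]; ring
    _ = qnum q x ^ i * (qnum q (1 - x) + qnum q x) ^ (n - i) := by
        rw [sum_Icc_choose_mul_choose_mul_pow _ _ h, add_comm (qnum q x)]
        field_simp

theorem stmt19_general (i n : ℕ) (hin : i ≤ n) (x q : ℝ)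
    (hx : x ∈ Set.Icc (0:ℝ) 1) (hq : q ∈ Set.Ioo (0:ℝ) 1) :
    ∑ k ∈ Finset.range (i + 1), q ^ k.choose 2 * qbinX q x k * qfact q k * qStir q i k =
      (1 / (qnum q (1 - x) + qnum q x) ^ (n - i)) *
        ∑ k ∈ Finset.Icc i n, ((k.choose i : ℝ) / (n.choose i : ℝ)) * qB k n x q := by
  have hq0 : 0 < q := hq.1
  have hq1 : q ≠ 1 := hq.2.ne
  have hpos : 0 < qnum q (1 - x) + qnum q x := by
    rcases hx.1.eq_or_lt with rfl | hx0
    · simpa [qnum_zero] using qnum_pos hq0 hq1 one_pos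
    · exact add_pos_of_nonneg_of_pos (qnum_nonneg hq0 hq1 (by linarith [hx.2]))
        (qnum_pos hq0 hq1 hx0)
  rw [sum_qbinX_mul_qStir hq0 hq1 x i, sum_Icc_choose_div_mul_qB hin]
  field_simp

theorem stmt19 (i n : ℕ) (hi : 1 ≤ i) (hin : i ≤ n) (x q : ℝ)
    (hx : x ∈ Set.Icc (0:ℝ) 1) (hq : q ∈ Set.Ioo (0:ℝ) 1) :
    ∑ k ∈ Finset.range (i + 1), q ^ k.choose 2 * qbinX q x k * qfact q k * qStir q i k =
      (1 / (qnum q (1 - x) + qnum q x) ^ (n - i)) *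
        ∑ k ∈ Finset.Icc i n, ((k.choose i : ℝ) / (n.choose i : ℝ)) * qB k n x q :=
  stmt19_general i n hin x q hx hq
end
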